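/- arXiv:2201.02466 — 4 statements merged into one kernel-verified Lean document; each statement's English description precedes it below -/
import Mathlib

section
/- For any binary word x of length n, the number of supersequences of x of length n+r (the radius-r insertion ball) has size exactly sum over i from 0 to r of binomial(n+r, i), independent of x. -/
/-!
Split a supersequence of `a :: x` by its first letter: either it is `a`, followed by a
supersequence of `x`, or it is another letter, which the leftmost embedding of `a :: x` skips,
followed by a supersequence of `a :: x`. Over a `q`-letter alphabet the ball sizes therefore
satisfy `N(a :: x, r + 1) = N(x, r + 1) + (q - 1) N(a :: x, r)`, with `N([], r) = q ^ r` and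
`N(x, 0) = 1`. By Pascal's rule, Levenshtein's `∑_{i ≤ r} C(|x| + r, i) (q - 1) ^ i` satisfies the
same recursion; for `q = 2` it is the binomial sum of the theorem.
-/

open Finset

theorem Nat.sum_range_succ_choose_mul_pow (m s k : ℕ) :
    ∑ i ∈ range (s + 1), (m + 1).choose i * k ^ i
      = ∑ i ∈ range (s + 1), m.choose i * k ^ i + k * ∑ i ∈ range s, m.choose i * k ^ i := by
  have pascal : ∑ i ∈ range s, (m + 1).choose (i + 1) * k ^ (i + 1)
      = ∑ i ∈ range s, m.choose (i + 1) * k ^ (i + 1) + k * ∑ i ∈ range s, m.choose i * k ^ i := by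
    rw [mul_sum, ← sum_add_distrib]
    refine sum_congr rfl fun i _ => ?_
    rw [Nat.choose_succ_succ', pow_succ]
    ring
  rw [sum_range_succ', sum_range_succ' (fun i => m.choose i * k ^ i), pascal]
  simp only [Nat.choose_zero_right]
  ring

namespace List

variable {α : Type*}

def insertionBall (x : List α) (r : ℕ) : Set (List α) :=
  {z | z.length = x.length + r ∧ x.Sublist z}

instance [Finite α] (x : List α) (r : ℕ) : Finite (insertionBall x r) :=
  ((finite_length_eq α _).subset fun _ hz => hz.1).to_subtype

theorem insertionBall_nil (r : ℕ) : insertionBall ([] : List α) r = {z | z.length = r} := by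
  simp [insertionBall]

theorem insertionBall_zero (x : List α) : insertionBall x 0 = {x} := by
  ext z
  simp only [insertionBall, Nat.add_zero, Set.mem_ofPred_eq, Set.mem_singleton_iff]
  constructor
  · rintro ⟨hlen, hsub⟩
    exact (hsub.eq_of_length hlen.symm).symm
  · rintro rfl
    exact ⟨rfl, Sublist.refl _⟩

theorem cons_sublist_cons_of_ne {a b : α} {x z : List α} (hab : b ≠ a) :
    (a :: x).Sublist (b :: z) ↔ (a :: x).Sublist z := by
  rw [sublist_cons_iff]
  constructor
  · rintro (h | ⟨_, h, _⟩)
    · exact h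
    · exact absurd (cons.inj h).1.symm hab
  · exact Or.inl

theorem insertionBall_cons_succ (a : α) (x : List α) (r : ℕ) :
    insertionBall (a :: x) (r + 1)
      = (a :: ·) '' insertionBall x (r + 1)
        ∪ (fun p : α × List α => p.1 :: p.2) '' ({a}ᶜ ×ˢ insertionBall (a :: x) r) := by
  ext z
  rcases z with _ | ⟨b, z⟩
  · simp [insertionBall]
  · by_cases hb : b = a
    · subst hb
      simp +arith [insertionBall, cons_sublist_cons]
    · simp +arith [insertionBall, hb, Ne.symm hb, cons_sublist_cons_of_ne hb]

theorem ncard_setOf_length_eq [Fintype α] (n : ℕ) :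
    {z : List α | z.length = n}.ncard = Fintype.card α ^ n :=
  (Nat.card_eq_fintype_card (α := Vector α n)).trans (card_vector n)

theorem ncard_insertionBall [Fintype α] [Nonempty α] (x : List α) (r : ℕ) :
    (insertionBall x r).ncard
      = ∑ i ∈ Finset.range (r + 1), (x.length + r).choose i * (Fintype.card α - 1) ^ i := by
  set k := Fintype.card α - 1
  have hq : Fintype.card α = k + 1 := (Nat.succ_pred_eq_of_pos Fintype.card_pos).symm
  have hcompl (a : α) : ({a}ᶜ : Set α).ncard = k := by
    rw [Set.ncard_compl, Set.ncard_singleton, Nat.card_eq_fintype_card]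
  induction x generalizing r with
  | nil =>
    rw [insertionBall_nil, ncard_setOf_length_eq, hq, add_pow]
    simp [mul_comm]
  | cons a x ihx =>
    induction r with
    | zero => simp [insertionBall_zero]
    | succ r ihr =>
      rw [insertionBall_cons_succ, Set.ncard_union_eq, Set.ncard_image_of_injective _ cons_injective,
        Set.ncard_image_of_injective, Set.ncard_prod, hcompl, ihx, ihr, length_cons,
        show x.length + 1 + (r + 1) = x.length + (r + 1) + 1 by omega,
        show x.length + 1 + r = x.length + (r + 1) by omega, Nat.sum_range_succ_choose_mul_pow]
      · rintro ⟨b, w⟩ ⟨b', w'⟩ h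
        simpa using h
      · rw [Set.disjoint_left]
        rintro _ ⟨_, _, rfl⟩ ⟨⟨b, _⟩, ⟨hb, _⟩, h⟩
        exact hb (cons.inj h).1

end List

/-- For any binary word `x` of length `n`, the radius-`r` insertion ball (the set of
supersequences of `x` of length `n + r`) has size `∑_{i=0}^{r} C(n+r, i)`. -/
theorem insertion_ball_card (x : List Bool) (r : ℕ) :
    {z : List Bool | z.length = x.length + r ∧ x.Sublist z}.ncard
      = ∑ i ∈ Finset.range (r + 1), (x.length + r).choose i := by
  refine (List.ncard_insertionBall x r).trans ?_
  simp
end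

section
/- Let D : Σ₂^{n-1} → Σ₂^{n-1} be any length-preserving decoder for the binary 1-deletion channel with code C = Σ₂ⁿ. Then the expected normalized Levenshtein distance of D is at least 1/n, with equality if and only if D is the identity (lazy) decoder. -/
/-- Levenshtein (insertion/deletion) distance between binary words: the minimum number of
insertions and deletions transforming one into the other, characterized via common
subsequences. -/
noncomputable def dL (x y : List Bool) : ℕ :=
  sInf {k | ∃ z : List Bool, z.Sublist x ∧ z.Sublist y ∧
    k = (x.length - z.length) + (y.length - z.length)}

private lemma dL_mem (x y : List Bool) :
    ∃ z : List Bool, z.Sublist x ∧ z.Sublist y ∧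
      dL x y = (x.length - z.length) + (y.length - z.length) := by
  have hne : {k | ∃ z : List Bool, z.Sublist x ∧ z.Sublist y ∧
      k = (x.length - z.length) + (y.length - z.length)}.Nonempty :=
    ⟨x.length + y.length, [], List.nil_sublist _, List.nil_sublist _, by simp⟩
  exact Nat.sInf_mem hne

private lemma dL_ge_one {x y : List Bool} (h : x.length + 1 = y.length) : 1 ≤ dL x y := by
  obtain ⟨z, hzx, _, he⟩ := dL_mem x y
  have := hzx.length_le
  omega

private lemma dL_eq_one_iff {x y : List Bool} (h : x.length + 1 = y.length) :
    dL x y = 1 ↔ x.Sublist y := by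
  constructor
  · intro h1
    obtain ⟨z, hzx, hzy, he⟩ := dL_mem x y
    have hl := hzx.length_le
    have hzl : z.length = x.length := by omega
    rwa [← hzx.eq_of_length hzl]
  · intro hs
    have h1 : dL x y ≤ 1 := Nat.sInf_le ⟨x, List.Sublist.refl x, hs, by omega⟩
    have := dL_ge_one h
    omega

private lemma exists_confuser : ∀ (y z : List Bool), y.length = z.length → z ≠ y →
    ∃ (c : List Bool) (i : ℕ), i < c.length ∧ c.length = y.length + 1 ∧
      c.eraseIdx i = y ∧ ¬ z.Sublist c := by
  intro y
  induction y with
  | nil =>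
    intro z hl hne
    cases z with
    | nil => exact absurd rfl hne
    | cons b z' => simp at hl
  | cons a y ih =>
    intro z hl hne
    cases z with
    | nil => simp at hl
    | cons b z' =>
      by_cases hab : b = a
      · subst hab
        have hne' : z' ≠ y := by rintro rfl; exact hne rfl
        obtain ⟨c, i, hic, hcl, hce, hns⟩ := ih z' (by simpa using hl) hne'
        refine ⟨b :: c, i + 1, by simp; omega, by simp [hcl], ?_, ?_⟩
        · rw [List.eraseIdx_cons_succ, hce]
        · intro hs
          cases hs with
          | cons _ h => exact hns ((List.sublist_cons_self b z').trans h)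
          | cons_cons _ h => exact hns h
      · refine ⟨a :: a :: y, 0, by simp, by simp, by simp, ?_⟩
        intro hs
        have hlen : z'.length = y.length := by simpa using hl.symm
        cases hs with
        | cons_cons _ h => exact hab rfl
        | cons _ h1 =>
          cases h1 with
          | cons_cons _ h => exact hab rfl
          | cons _ h2 =>
            have := h2.length_le
            simp at this
            omega

/-- Any length-preserving decoder `D : Σ₂^{n-1} → Σ₂^{n-1}` for the binary 1-deletion
channel with code `C = Σ₂ⁿ` has expected normalized Levenshtein distance at least `1/n`,
with equality if and only if `D` is the identity (lazy) decoder. -/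
theorem length_preserving_decoder_ge_lazy (n : ℕ) (hn : 1 ≤ n)
    (D : List Bool → List Bool)
    (hD : ∀ y : List Bool, y.length = n - 1 → (D y).length = n - 1) :
    (1 / (2 : ℝ) ^ n) * (∑ c : List.Vector Bool n, ∑ i ∈ Finset.range n,
        (1 / (n : ℝ)) * ((dL (D (c.toList.eraseIdx i)) c.toList : ℝ) / n)) ≥ 1 / n
    ∧ ((1 / (2 : ℝ) ^ n) * (∑ c : List.Vector Bool n, ∑ i ∈ Finset.range n,
        (1 / (n : ℝ)) * ((dL (D (c.toList.eraseIdx i)) c.toList : ℝ) / n)) = 1 / n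
      ↔ ∀ y : List Bool, y.length = n - 1 → D y = y) := by
  have hn0 : (0:ℝ) < n := by exact_mod_cast hn
  set s : Finset (List.Vector Bool n × ℕ) := Finset.univ ×ˢ Finset.range n with hs
  set F : List.Vector Bool n × ℕ → ℕ :=
    fun p => dL (D (p.1.toList.eraseIdx p.2)) p.1.toList with hF
  have hlen : ∀ p ∈ s, (D (p.1.toList.eraseIdx p.2)).length + 1 = p.1.toList.length := by
    intro p hp
    rw [hs, Finset.mem_product, Finset.mem_range] at hp
    have h1 : (p.1.toList.eraseIdx p.2).length = n - 1 := by
      rw [List.length_eraseIdx]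
      simp [p.1.toList_length, hp.2]
    rw [hD _ h1, p.1.toList_length]
    omega
  have hge1 : ∀ p ∈ s, 1 ≤ F p := fun p hp => dL_ge_one (hlen p hp)
  have hcard : (s.card : ℝ) = 2 ^ n * n := by
    rw [hs, Finset.card_product, Finset.card_univ, card_vector, Finset.card_range]
    push_cast [Fintype.card_bool]
    ring
  have hrw : (1 / (2 : ℝ) ^ n) * (∑ c : List.Vector Bool n, ∑ i ∈ Finset.range n,
        (1 / (n : ℝ)) * ((dL (D (c.toList.eraseIdx i)) c.toList : ℝ) / n))
      = (∑ p ∈ s, (F p : ℝ)) / (2 ^ n * n ^ 2) := by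
    rw [hs, Finset.sum_product, Finset.sum_div, Finset.mul_sum]
    refine Finset.sum_congr rfl fun c _ => ?_
    rw [Finset.sum_div, Finset.mul_sum]
    refine Finset.sum_congr rfl fun i _ => ?_
    simp only [hF]
    ring
  set A : ℝ := ∑ p ∈ s, (F p : ℝ) with hA
  have hsum1 : ∑ p ∈ s, (1:ℝ) = 2 ^ n * n := by
    rw [Finset.sum_const, nsmul_eq_mul, mul_one, hcard]
  have hBA : 2 ^ n * n ≤ A := by
    rw [← hsum1, hA]
    exact Finset.sum_le_sum fun p hp => by exact_mod_cast hge1 p hp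
  have heqiff : A = 2 ^ n * n ↔ ∀ p ∈ s, F p = 1 := by
    rw [← hsum1, hA, eq_comm,
      Finset.sum_eq_sum_iff_of_le fun p hp => by exact_mod_cast hge1 p hp]
    constructor
    · intro h p hp
      have := (h p hp).symm
      exact_mod_cast this
    · intro h p hp
      have := h p hp
      exact_mod_cast this.symm
  have hpos : (0:ℝ) < 2 ^ n * n ^ 2 := by positivity
  have hDiff : (∀ p ∈ s, F p = 1) ↔ ∀ y : List Bool, y.length = n - 1 → D y = y := by
    constructor
    · intro hall y hy
      by_contra hne
      have hDy : (D y).length = n - 1 := hD y hy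
      obtain ⟨c, i, hic, hcl, hce, hns⟩ := exists_confuser y (D y) (by omega) hne
      have hcn : c.length = n := by omega
      set v : List.Vector Bool n := ⟨c, hcn⟩ with hv
      have hvl : v.toList = c := rfl
      have hmem : (v, i) ∈ s := by
        rw [hs, Finset.mem_product, Finset.mem_range]
        exact ⟨Finset.mem_univ _, by omega⟩
      have h1 := hall (v, i) hmem
      simp only [hF] at h1
      rw [hvl, hce] at h1
      have hsub : (D y).Sublist c :=
        (dL_eq_one_iff (by rw [hDy, hcn]; omega)).mp h1
      exact hns hsub
    · intro hid p hp
      rw [hs, Finset.mem_product, Finset.mem_range] at hp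
      have h1 : (p.1.toList.eraseIdx p.2).length = n - 1 := by
        rw [List.length_eraseIdx]
        simp [p.1.toList_length, hp.2]
      simp only [hF]
      rw [hid _ h1]
      refine (dL_eq_one_iff ?_).mpr (List.eraseIdx_sublist _ _)
      rw [p.1.toList_length]
      omega
  constructor
  · rw [ge_iff_le, hrw, le_div_iff₀ hpos]
    calc (1:ℝ) / n * (2 ^ n * n ^ 2) = 2 ^ n * n := by field_simp
      _ ≤ A := hBA
  · rw [hrw, div_eq_div_iff (ne_of_gt hpos) (ne_of_gt hn0), ← hDiff, ← heqiff]
    constructor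
    · intro h
      have : A * n = 2 ^ n * n * n := by rw [h]; ring
      exact mul_right_cancel₀ (ne_of_gt hn0) this
    · intro h
      rw [h]; ring
end

section
/- Let y ∈ Σ₂^{n-1} be a binary word with runs of lengths r₁, ..., r_t. For each word x ∈ Σ₂ⁿ obtained from y by prolonging the i-th run by one symbol, Emb(x; y) = r_i + 1; for each x obtained from y by inserting a symbol that creates a new run of length one, Emb(x; y) = 1; and every x ∈ Σ₂ⁿ that is a supersequence of y is of one of these two forms. Consequently max over x ∈ Σ₂ⁿ of Emb(x; y) = 1 + max_i r_i, achieved by prolonging a run of maximal length. -/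
/-- The embedding number `Emb(x; y)`: the number of index subsets `I` of `[|x|]` with
`x_I = y`, i.e. the number of ways `y` occurs as a subsequence of `x`. -/
def Emb (x y : List Bool) : ℕ :=
  (Finset.univ.filter (fun I : Finset (Fin x.length) =>
    (I.sort (· ≤ ·)).map x.get = y)).card

/-- The length of the longest run (maximal block of equal consecutive symbols) of a word. -/
def maxRun (l : List Bool) : ℕ := ((l.splitBy (· == ·)).map List.length).foldr max 0

/-- The number of runs of a word. -/
def numRuns (l : List Bool) : ℕ := (l.splitBy (· == ·)).length

/-! When `x` is one symbol longer than `y`, an embedding of `y` into `x` omits exactly one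
position of `x`, so `Emb(x; y)` counts the positions whose deletion from `x` leaves `y`. If
deleting positions `j < k` of `x` gives the same word, then `x` is constant on `[j, k]`; hence
in `A ++ c^(r+1) ++ B`, with `c` differing from the neighbouring symbols, exactly the `r + 1`
positions of the run of `c`s can be deleted to leave `A ++ c^r ++ B`. This gives `r + 1` for a
prolonged run and `1` for a new run of length one. Conversely a supersequence of `y` is `y` with
some `b` inserted; sliding the insertion left past the `b`s before it, it either creates a new
run or lands at the start of a run of `b`s, which it prolongs. -/

open List

namespace List

variable {α : Type*}

theorem _root_.Finset.sort_compl_singleton {n : ℕ} (i : Fin n) :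
    ({i}ᶜ : Finset (Fin n)).sort (· ≤ ·) = (finRange n).eraseIdx i := by
  refine ((perm_ext_iff_of_nodup (Finset.sort_nodup _ _)
    ((eraseIdx_sublist _ _).nodup (nodup_finRange n))).2 fun a => ?_).eq_of_pairwise'
    (Finset.pairwise_sort _ _) ((pairwise_le_finRange n).sublist (eraseIdx_sublist _ _))
  rw [Finset.mem_sort, ((erase_getElem (by simp)).symm.mem_iff :
    a ∈ (finRange n).eraseIdx i ↔ _), (nodup_finRange n).mem_erase_iff]
  simp

theorem map_get_sort_compl_singleton (l : List α) (i : Fin l.length) :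
    (({i}ᶜ : Finset (Fin l.length)).sort (· ≤ ·)).map l.get = l.eraseIdx i := by
  rw [Finset.sort_compl_singleton, ← eraseIdx_map, map_get_finRange]

theorem getElem?_eq_getElem?_succ_of_eraseIdx_eq {l : List α} {j k m : ℕ}
    (h : l.eraseIdx j = l.eraseIdx k) (hj : j ≤ m) (hk : m < k) : l[m]? = l[m + 1]? := by
  have := congrArg (·[m]?) h
  simp only [getElem?_eraseIdx, if_neg (show ¬m < j by omega), if_pos hk] at this
  exact this.symm

theorem eraseIdx_append_replicate_append (A B : List α) (c : α) {r j : ℕ}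
    (h₁ : A.length ≤ j) (h₂ : j ≤ A.length + r) :
    (A ++ replicate (r + 1) c ++ B).eraseIdx j = A ++ replicate r c ++ B := by
  rw [append_assoc, eraseIdx_append_of_length_le h₁,
    eraseIdx_append_of_lt_length (by simp; omega), eraseIdx_replicate, if_pos (by omega)]
  simp

theorem eraseIdx_append_replicate_append_eq_iff {A B : List α} {c : α} {r j : ℕ}
    (hA : A.getLast? ≠ some c) (hB : B.head? ≠ some c) :
    (A ++ replicate (r + 1) c ++ B).eraseIdx j = A ++ replicate r c ++ B ↔
      A.length ≤ j ∧ j ≤ A.length + r := by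
  set x := A ++ replicate (r + 1) c ++ B
  have hx : x = A ++ (replicate (r + 1) c ++ B) := append_assoc _ _ _
  have hx_run : ∀ t ≤ r, x[A.length + t]? = some c := fun t ht => by
    rw [hx, getElem?_append_right (by omega), Nat.add_sub_cancel_left,
      getElem?_append_left (by simp; omega), getElem?_replicate, if_pos (by omega)]
  have hx_head : x[A.length + r + 1]? = B.head? := by
    rw [hx, add_assoc, getElem?_append_right (by omega), Nat.add_sub_cancel_left,
      getElem?_append_right (by simp), length_replicate, Nat.sub_self, head?_eq_getElem?]
  refine ⟨fun h => ⟨?_, ?_⟩, fun h => eraseIdx_append_replicate_append A B c h.1 h.2⟩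
  · by_contra! hj
    have hx_last : x[A.length - 1]? = A.getLast? := by
      rw [hx, getLast?_eq_getElem?, getElem?_append_left (by omega)]
    have := getElem?_eq_getElem?_succ_of_eraseIdx_eq (m := A.length - 1)
      (h.trans (eraseIdx_append_replicate_append A B c le_rfl (by omega)).symm)
      (by omega) (by omega)
    rw [Nat.sub_add_cancel (by omega), hx_last, ← add_zero A.length, hx_run 0 (by omega)] at this
    exact hA this
  · by_contra! hj
    have := getElem?_eq_getElem?_succ_of_eraseIdx_eq (m := A.length + r)
      ((eraseIdx_append_replicate_append A B c (j := A.length + r) (by omega) le_rfl).trans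
        h.symm) le_rfl hj
    rw [hx_head, hx_run r le_rfl] at this
    exact hB this.symm

theorem Sublist.exists_eq_take_append_cons_drop {l l' : List α} (h : l <+ l')
    (hlen : l'.length = l.length + 1) :
    ∃ k ≤ l.length, ∃ b, l' = l.take k ++ b :: l.drop k := by
  induction h with
  | slnil => simp at hlen
  | cons a h _ =>
    exact ⟨0, by omega, a, by simp [(h.eq_of_length (by simp at hlen; omega)).symm]⟩
  | cons_cons a _ ih =>
    obtain ⟨k, hk, b, rfl⟩ := ih (by simpa using hlen)
    exact ⟨k + 1, by simpa using hk, b, by simp⟩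

/-- An insertion of `b` can be slid to the left past every copy of `b` preceding it. -/
theorem exists_take_append_cons_drop_eq_getLast?_ne (l : List α) (b : α) :
    ∀ k ≤ l.length, ∃ k', l.take k' ++ b :: l.drop k' = l.take k ++ b :: l.drop k ∧
      (l.take k').getLast? ≠ some b
  | 0, _ => ⟨0, rfl, by simp⟩
  | k + 1, hk => by
    have hk' : k < l.length := hk
    by_cases h : l[k] = b
    · obtain ⟨k', h₁, h₂⟩ := exists_take_append_cons_drop_eq_getLast?_ne l b k hk'.le
      refine ⟨k', h₁.trans ?_, h₂⟩
      rw [take_add_one, getElem?_eq_getElem hk', drop_eq_getElem_cons hk', h]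
      simp
    · refine ⟨k + 1, rfl, ?_⟩
      rw [take_add_one, getElem?_eq_getElem hk']
      simpa only [Option.toList_some, getLast?_concat, ne_eq, Option.some_inj] using h

theorem flatten_eq_take_append_getElem_append_drop (R : List (List α)) {i : ℕ}
    (hi : i < R.length) : R.flatten = (R.take i).flatten ++ R[i] ++ (R.drop (i + 1)).flatten := by
  conv_lhs => rw [← take_append_drop i R, drop_eq_getElem_cons hi]
  rw [flatten_append, flatten_cons, append_assoc]

theorem flatten_set_eq_take_append_append_drop (R : List (List α)) {i : ℕ}
    (hi : i < R.length) (g : List α) :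
    (R.set i g).flatten = (R.take i).flatten ++ g ++ (R.drop (i + 1)).flatten := by
  rw [set_eq_take_append_cons_drop, if_pos hi]
  simp

theorem getLast?_flatten_take_ne_head? {R : List (List α)} (hnil : [] ∉ R)
    (hR : R.IsChain fun a b => ∃ ha hb, a.getLast ha ≠ b.head hb) {i : ℕ}
    (hi : i < R.length) :
    (R.take i).flatten.getLast? ≠ R[i].head? := by
  cases i with
  | zero =>
    have hne : R[0] ≠ [] := fun h => hnil (h ▸ getElem_mem hi)
    exact fun h => hne (head?_eq_none_iff.1 h.symm)
  | succ j =>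
    obtain ⟨ha, hb, hne⟩ := isChain_iff_getElem.1 hR j hi
    rw [take_add_one, getElem?_eq_getElem (by omega)]
    simpa only [Option.toList_some, flatten_append, flatten_cons, flatten_nil, append_nil,
      getLast?_append, getLast?_eq_some_getLast ha, head?_eq_some_head hb, Option.some_or, ne_eq,
      Option.some_inj] using hne

theorem head?_flatten_drop_ne_getLast? {R : List (List α)} (hnil : [] ∉ R)
    (hR : R.IsChain fun a b => ∃ ha hb, a.getLast ha ≠ b.head hb) {i : ℕ}
    (hi : i < R.length) :
    (R.drop (i + 1)).flatten.head? ≠ R[i].getLast? := by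
  by_cases hlast : i + 1 < R.length
  · obtain ⟨ha, hb, hne⟩ := isChain_iff_getElem.1 hR i hlast
    rw [drop_eq_getElem_cons hlast]
    simpa only [flatten_cons, head?_append, head?_eq_some_head hb, getLast?_eq_some_getLast ha,
      Option.some_or, ne_eq, Option.some_inj] using hne.symm
  · have hne : R[i] ≠ [] := fun h => hnil (h ▸ getElem_mem hi)
    rw [drop_eq_nil_of_le (by omega)]
    exact fun h => hne (getLast?_eq_none_iff.1 h.symm)

theorem eq_replicate_headI_of_mem_splitBy [Inhabited α] [BEq α] [LawfulBEq α] {l g : List α}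
    (h : g ∈ l.splitBy (· == ·)) : g = replicate g.length g.headI := by
  have hchain : g.IsChain (· = ·) := (isChain_of_mem_splitBy h).imp fun _ _ => beq_iff_eq.1
  obtain ⟨a, t, rfl⟩ := exists_cons_of_ne_nil (ne_nil_of_mem_splitBy h)
  exact isChain_eq_iff_eq_replicate.1 hchain a rfl

theorem isChain_getLast_ne_head_splitBy [BEq α] [LawfulBEq α] (l : List α) :
    (l.splitBy (· == ·)).IsChain fun a b => ∃ ha hb, a.getLast ha ≠ b.head hb :=
  (isChain_getLast_head_splitBy _ l).imp fun _ _ ⟨ha, hb, h⟩ => ⟨ha, hb, by simpa using h⟩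

end List

section Runs

variable {α : Type*} [Inhabited α]

def prolongRun (R : List (List α)) (i : Fin R.length) : List α :=
  (R.set i ((R.get i).headI :: R.get i)).flatten

theorem prolongRun_eq (R : List (List α)) (i : Fin R.length) :
    prolongRun R i = (R.take i).flatten ++ (R[i.1].headI :: R[i.1]) ++ (R.drop (i + 1)).flatten :=
  R.flatten_set_eq_take_append_append_drop i.2 _

theorem exists_prolongRun_eq {R : List (List α)} (hR : ∀ g ∈ R, g = replicate g.length g.headI)
    {k : ℕ} {b : α} (hlast : (R.flatten.take k).getLast? ≠ some b)
    (hhead : (R.flatten.drop k).head? = some b) :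
    ∃ i, R.flatten.take k ++ b :: R.flatten.drop k = prolongRun R i := by
  induction R generalizing k with
  | nil => simp at hhead
  | cons g R ih =>
    by_cases hk : k < g.length
    · have hg := hR g mem_cons_self
      obtain rfl : k = 0 := by
        by_contra hk0
        rw [flatten_cons, take_append_of_le_length hk.le, hg, take_replicate,
          getLast?_replicate, if_neg (by omega)] at hlast
        rw [flatten_cons, drop_append_of_le_length hk.le, hg, drop_replicate,
          head?_append, head?_replicate, if_neg (by omega)] at hhead
        exact hlast (by simpa using hhead)
      obtain ⟨a, t, rfl⟩ := exists_cons_of_ne_nil (ne_nil_of_length_pos (by omega))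
      obtain rfl : a = b := by simpa using hhead
      exact ⟨⟨0, by simp⟩, by simp [prolongRun]⟩
    · obtain ⟨k, rfl⟩ := Nat.exists_eq_add_of_le (not_lt.1 hk)
      simp only [flatten_cons, take_length_add_append, drop_length_add_append] at hlast hhead ⊢
      obtain ⟨i, hi⟩ := ih (k := k) (fun g hg => hR g (mem_cons_of_mem _ hg))
        (fun h => hlast (by simp [getLast?_append, h])) (by simpa using hhead)
      exact ⟨i.succ, by simp [prolongRun, hi]⟩

theorem length_prolongRun (R : List (List α)) (i : Fin R.length) :
    (prolongRun R i).length = R.flatten.length + 1 := by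
  rw [prolongRun_eq, R.flatten_eq_take_append_getElem_append_drop i.2]
  simp
  omega

theorem eq_prolongRun_or_eq_insert_new_run [BEq α] [LawfulBEq α]
    {x y : List α} (hlen : x.length = y.length + 1) (hsub : y <+ x) :
    (∃ i, x = prolongRun (y.splitBy (· == ·)) i) ∨
      ∃ k b, x = y.take k ++ b :: y.drop k ∧
        (y.take k).getLast? ≠ some b ∧ (y.drop k).head? ≠ some b := by
  obtain ⟨k₀, hk₀, b, rfl⟩ := hsub.exists_eq_take_append_cons_drop hlen
  obtain ⟨k, hk, hlast⟩ := y.exists_take_append_cons_drop_eq_getLast?_ne b k₀ hk₀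
  rw [← hk]
  by_cases hhead : (y.drop k).head? = some b
  · obtain ⟨i, hi⟩ := exists_prolongRun_eq (R := y.splitBy (· == ·))
      (fun g hg => eq_replicate_headI_of_mem_splitBy hg) (by rwa [flatten_splitBy])
      (by rwa [flatten_splitBy])
    rw [flatten_splitBy] at hi
    exact Or.inl ⟨i, hi⟩
  · exact Or.inr ⟨k, b, rfl, hlast, hhead⟩

end Runs

theorem emb_eq_card_eraseIdx {x y : List Bool} (hlen : x.length = y.length + 1) :
    Emb x y = (Finset.univ.filter fun i : Fin x.length => x.eraseIdx i = y).card := by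
  refine (Finset.card_bij (fun i _ => ({i}ᶜ : Finset (Fin x.length))) ?_ ?_ ?_).symm
  · intro i hi
    simpa [map_get_sort_compl_singleton] using hi
  · intro i _ j _ hij
    simpa using congrArg (·ᶜ) hij
  · intro I hI
    simp only [Finset.mem_filter, Finset.mem_univ, true_and] at hI
    have hcard : Iᶜ.card = 1 := by
      rw [Finset.card_compl, ← Finset.length_sort (· ≤ ·) (s := I), ← length_map x.get, hI]
      simp [hlen]
    obtain ⟨i, hi⟩ := Finset.card_eq_one.1 hcard
    refine ⟨i, ?_, by rw [← hi, compl_compl]⟩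
    simpa [← map_get_sort_compl_singleton, ← hi] using hI

theorem emb_eq_zero_of_not_sublist {x y : List Bool} (hlen : x.length = y.length + 1)
    (h : ¬y <+ x) : Emb x y = 0 := by
  rw [emb_eq_card_eraseIdx hlen, Finset.card_eq_zero, Finset.filter_eq_empty_iff]
  exact fun i _ hi => h (hi ▸ eraseIdx_sublist x i)

theorem emb_append_replicate_succ {A B : List Bool} {c : Bool} (r : ℕ)
    (hA : A.getLast? ≠ some c) (hB : B.head? ≠ some c) :
    Emb (A ++ replicate (r + 1) c ++ B) (A ++ replicate r c ++ B) = r + 1 := by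
  rw [emb_eq_card_eraseIdx (by simp; omega)]
  have hlt : A.length + r < (A ++ replicate (r + 1) c ++ B).length := by simp; omega
  have hfilter : (Finset.univ.filter fun i : Fin (A ++ replicate (r + 1) c ++ B).length =>
      (A ++ replicate (r + 1) c ++ B).eraseIdx i = A ++ replicate r c ++ B) =
      Finset.Icc ⟨A.length, by omega⟩ ⟨A.length + r, hlt⟩ := by
    ext i
    simp only [Finset.mem_filter, Finset.mem_univ, true_and, Finset.mem_Icc, Fin.le_def]
    exact eraseIdx_append_replicate_append_eq_iff hA hB
  rw [hfilter, Fin.card_Icc, Fin.val_mk, Fin.val_mk]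
  omega

theorem emb_prolongRun {R : List (List Bool)} (hnil : [] ∉ R)
    (hR : ∀ g ∈ R, g = replicate g.length g.headI)
    (hchain : R.IsChain fun a b => ∃ ha hb, a.getLast ha ≠ b.head hb) (i : Fin R.length) :
    Emb (prolongRun R i) R.flatten = (R.get i).length + 1 := by
  have hg := hR _ (getElem_mem i.2)
  have hpos : R[i.1].length ≠ 0 := by simpa using ne_of_mem_of_not_mem (getElem_mem i.2) hnil
  have hA := getLast?_flatten_take_ne_head? hnil hchain i.2
  have hB := head?_flatten_drop_ne_getLast? hnil hchain i.2
  rw [hg, head?_replicate, if_neg hpos] at hA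
  rw [hg, getLast?_replicate, if_neg hpos] at hB
  have key := emb_append_replicate_succ R[i.1].length hA hB
  rw [replicate_succ, ← hg, ← prolongRun_eq,
    ← R.flatten_eq_take_append_getElem_append_drop i.2] at key
  simpa using key

section Binary

variable (y : List Bool)

theorem length_le_maxRun {g : List Bool} (hg : g ∈ y.splitBy (· == ·)) :
    g.length ≤ maxRun y :=
  List.le_max_of_le' 0 (mem_map_of_mem hg) le_rfl

theorem exists_length_get_splitBy_eq_maxRun (hy : y ≠ []) :
    ∃ i, ((y.splitBy (· == ·)).get i).length = maxRun y := by
  have hne : (y.splitBy (· == ·)).map length ≠ [] := by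
    simpa using (splitBy_ne_nil (r := (· == ·))).2 hy
  obtain ⟨g, hg, hlen⟩ := mem_map.1 (maximum_mem (foldr_max_of_ne_nil hne).symm)
  obtain ⟨i, rfl⟩ := get_of_mem hg
  exact ⟨i, hlen⟩

theorem emb_prolongRun_splitBy (i : Fin (y.splitBy (· == ·)).length) :
    Emb (prolongRun (y.splitBy (· == ·)) i) y = ((y.splitBy (· == ·)).get i).length + 1 := by
  have := emb_prolongRun (nil_notMem_splitBy _ y)
    (fun g hg => eq_replicate_headI_of_mem_splitBy hg) (isChain_getLast_ne_head_splitBy y) i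
  rwa [flatten_splitBy] at this

theorem emb_take_append_cons_drop {k : ℕ} {b : Bool} (hlast : (y.take k).getLast? ≠ some b)
    (hhead : (y.drop k).head? ≠ some b) : Emb (y.take k ++ b :: y.drop k) y = 1 := by
  simpa using emb_append_replicate_succ 0 hlast hhead

theorem emb_le_maxRun_add_one {x : List Bool} (hlen : x.length = y.length + 1) :
    Emb x y ≤ maxRun y + 1 := by
  by_cases hsub : y <+ x
  · rcases eq_prolongRun_or_eq_insert_new_run hlen hsub with ⟨i, rfl⟩ | ⟨k, b, rfl, hl, hh⟩
    · rw [emb_prolongRun_splitBy]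
      exact Nat.succ_le_succ (length_le_maxRun y (get_mem _ i))
    · rw [emb_take_append_cons_drop y hl hh]
      omega
  · rw [emb_eq_zero_of_not_sublist hlen hsub]
    omega

theorem exists_emb_eq_maxRun_add_one :
    ∃ x : List Bool, x.length = y.length + 1 ∧ Emb x y = maxRun y + 1 := by
  rcases eq_or_ne y [] with rfl | hy
  · refine ⟨[true], rfl, ?_⟩
    simpa [maxRun] using emb_take_append_cons_drop [] (k := 0) (b := true)
  · obtain ⟨i, hi⟩ := exists_length_get_splitBy_eq_maxRun y hy
    refine ⟨prolongRun _ i, ?_, by rw [emb_prolongRun_splitBy, hi]⟩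
    rw [length_prolongRun, flatten_splitBy]

end Binary

theorem emb_one_insertion_general (y : List Bool) :
    (∀ i : Fin (y.splitBy (· == ·)).length,
      Emb (((y.splitBy (· == ·)).set i.1
        (((y.splitBy (· == ·)).get i).headI :: (y.splitBy (· == ·)).get i)).flatten) y
        = ((y.splitBy (· == ·)).get i).length + 1)
    ∧ (∀ x : List Bool, ∀ k : ℕ, ∀ b : Bool,
        x = y.take k ++ b :: y.drop k →
        (y.take k).getLast? ≠ some b → (y.drop k).head? ≠ some b →
        Emb x y = 1)
    ∧ (∀ x : List Bool, x.length = y.length + 1 → y.Sublist x →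
        (∃ i : Fin (y.splitBy (· == ·)).length,
          x = ((y.splitBy (· == ·)).set i.1
            (((y.splitBy (· == ·)).get i).headI :: (y.splitBy (· == ·)).get i)).flatten)
        ∨ (∃ k : ℕ, ∃ b : Bool, x = y.take k ++ b :: y.drop k ∧
            (y.take k).getLast? ≠ some b ∧ (y.drop k).head? ≠ some b))
    ∧ (∀ x : List Bool, x.length = y.length + 1 → Emb x y ≤ maxRun y + 1)
    ∧ (∃ x : List Bool, x.length = y.length + 1 ∧ Emb x y = maxRun y + 1) :=
  ⟨emb_prolongRun_splitBy y,
    fun _ _ _ hx hlast hhead => hx ▸ emb_take_append_cons_drop y hlast hhead,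
    fun _ hlen hsub => eq_prolongRun_or_eq_insert_new_run hlen hsub,
    fun _ hlen => emb_le_maxRun_add_one y hlen,
    exists_emb_eq_maxRun_add_one y⟩

/-- For a nonempty binary word `y` with runs `R = y.splitBy (·==·)` of lengths
`r₁, …, r_t`: prolonging the `i`-th run by one symbol yields a word `x` with
`Emb(x; y) = r_i + 1`; inserting a symbol that creates a new run of length one yields
`Emb(x; y) = 1`; every supersequence `x ∈ Σ₂^{|y|+1}` of `y` is of one of these two forms;
and consequently the maximum of `Emb(x; y)` over `x ∈ Σ₂^{|y|+1}` equals
`1 + max_i r_i`, achieved by prolonging a run of maximal length. -/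
theorem emb_one_insertion (y : List Bool) (hy : y ≠ []) :
    (∀ i : Fin (y.splitBy (· == ·)).length,
      Emb (((y.splitBy (· == ·)).set i.1
        (((y.splitBy (· == ·)).get i).headI :: (y.splitBy (· == ·)).get i)).flatten) y
        = ((y.splitBy (· == ·)).get i).length + 1)
    ∧ (∀ x : List Bool, ∀ k : ℕ, ∀ b : Bool,
        x = y.take k ++ b :: y.drop k →
        (y.take k).getLast? ≠ some b → (y.drop k).head? ≠ some b →
        Emb x y = 1)
    ∧ (∀ x : List Bool, x.length = y.length + 1 → y.Sublist x →
        (∃ i : Fin (y.splitBy (· == ·)).length,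
          x = ((y.splitBy (· == ·)).set i.1
            (((y.splitBy (· == ·)).get i).headI :: (y.splitBy (· == ·)).get i)).flatten)
        ∨ (∃ k : ℕ, ∃ b : Bool, x = y.take k ++ b :: y.drop k ∧
            (y.take k).getLast? ≠ some b ∧ (y.drop k).head? ≠ some b))
    ∧ (∀ x : List Bool, x.length = y.length + 1 → Emb x y ≤ maxRun y + 1)
    ∧ (∃ x : List Bool, x.length = y.length + 1 ∧ Emb x y = maxRun y + 1) :=
  emb_one_insertion_general y
end

section
/- For every n ≥ 2, the average over all binary words of length n of the maximal run length is at most 2·log₂(n). -/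
/-! ### Auxiliary lemmas -/

lemma foldr_max_le {L : List ℕ} {n : ℕ} (h : ∀ a ∈ L, a ≤ n) : L.foldr max 0 ≤ n := by
  induction L with
  | nil => simp
  | cons a L ih => simp only [List.foldr_cons, max_le_iff]
                   exact ⟨h a (by simp), ih fun b hb => h b (by simp [hb])⟩

lemma exists_ge_of_le_foldr_max {L : List ℕ} {r : ℕ} (hr : 1 ≤ r) (h : r ≤ L.foldr max 0) :
    ∃ a ∈ L, r ≤ a := by
  induction L with
  | nil => simp at h; omega
  | cons a L ih =>
    simp only [List.foldr_cons, le_max_iff] at h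
    rcases h with h | h
    · exact ⟨a, by simp, h⟩
    · obtain ⟨b, hb, hrb⟩ := ih h
      exact ⟨b, by simp [hb], hrb⟩

lemma maxRun_le_length (l : List Bool) : maxRun l ≤ l.length := by
  apply foldr_max_le
  intro a ha
  simp only [List.mem_map] at ha
  obtain ⟨c, hc, rfl⟩ := ha
  have := List.infix_of_mem_flatten hc
  rw [List.flatten_splitBy] at this
  exact this.length_le

lemma chain'_eq_replicate {c : List Bool} (h : c.Chain' (fun x y => (x == y) = true)) :
    ∃ b, c = List.replicate c.length b := by
  induction c with
  | nil => exact ⟨false, rfl⟩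
  | cons a c ih =>
    have h2 := (List.isChain_cons.mp h).2
    obtain ⟨b, hb⟩ := ih h2
    refine ⟨a, ?_⟩
    simp only [List.length_cons, List.replicate_succ, List.cons.injEq, true_and]
    cases c with
    | nil => simp
    | cons x c =>
      have hax : (a == x) = true := (List.isChain_cons_cons.mp h).1
      have : a = x := by simpa using hax
      subst this
      have hba : b = a := by
        have := congrArg (fun l => l.headD false) hb
        simp [List.replicate_succ] at this
        exact this.symm
      subst hba
      exact hb

lemma exists_window {l : List Bool} {r : ℕ} (hr : 1 ≤ r) (h : r ≤ maxRun l) :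
    ∃ i b, i + r ≤ l.length ∧ (l.drop i).take r = List.replicate r b := by
  obtain ⟨a, ha, hra⟩ := exists_ge_of_le_foldr_max hr h
  simp only [List.mem_map] at ha
  obtain ⟨c, hc, rfl⟩ := ha
  have hinf : c <:+: l := by
    have := List.infix_of_mem_flatten hc
    rwa [List.flatten_splitBy] at this
  obtain ⟨s, t, hst⟩ := hinf
  obtain ⟨b, hb⟩ := chain'_eq_replicate (List.isChain_of_mem_splitBy hc)
  refine ⟨s.length, b, ?_, ?_⟩
  · have : l.length = s.length + c.length + t.length := by
      rw [← hst]; simp [List.length_append]; ring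
    omega
  · have hdrop : l.drop s.length = c ++ t := by
      rw [← hst, List.append_assoc, List.drop_left]
    rw [hdrop, List.take_append_of_le_length hra, hb, List.take_replicate]
    congr 1
    omega

lemma window_decomp {l : List Bool} {i r : ℕ} {b : Bool}
    (h : (l.drop i).take r = List.replicate r b) :
    l = l.take i ++ (List.replicate r b ++ l.drop (i + r)) := by
  conv_lhs => rw [← List.take_append_drop i l]
  congr 1
  conv_lhs => rw [← List.take_append_drop r (l.drop i)]
  rw [h, List.drop_drop]

lemma window_head {l : List Bool} {i r : ℕ} {b : Bool} (hr : 1 ≤ r)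
    (h : (l.drop i).take r = List.replicate r b) :
    (l.take (i + 1)).drop i = [b] := by
  rw [List.drop_take]
  have h1 : (l.drop i).take 1 = List.take 1 ((l.drop i).take r) := by
    rw [List.take_take]
    congr 1
    omega
  have : i + 1 - i = 1 := by omega
  rw [this, h1, h, List.take_replicate]
  have : 1 ⊓ r = 1 := by omega
  rw [this, List.replicate_one]

lemma card_window_le (n i r : ℕ) (hr : 1 ≤ r) (hir : i + r ≤ n) :
    (Finset.univ.filter (fun c : List.Vector Bool n =>
        ∃ b, (c.toList.drop i).take r = List.replicate r b)).card ≤ 2 ^ (n - r + 1) := by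
  classical
  set m := n - r + 1 with hm
  have hcard : (Finset.image List.Vector.toList
      (Finset.univ : Finset (List.Vector Bool m))).card = 2 ^ m := by
    rw [Finset.card_image_of_injective _ List.Vector.toList_injective, Finset.card_univ,
      card_vector, Fintype.card_bool]
  rw [← hcard]
  apply Finset.card_le_card_of_injOn
    (fun c => c.toList.take (i+1) ++ c.toList.drop (i+r))
  · intro c hc
    have hlen : (c.toList.take (i+1) ++ c.toList.drop (i+r)).length = m := by
      simp only [List.length_append, List.length_take, List.length_drop,
        List.Vector.toList_length]
      omega
    simp only [Finset.mem_coe, Finset.mem_image, Finset.mem_univ, true_and]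
    exact ⟨⟨_, hlen⟩, rfl⟩
  · intro c₁ hc₁ c₂ hc₂ heq
    simp only [Finset.mem_coe, Finset.mem_filter, Finset.mem_univ, true_and] at hc₁ hc₂
    obtain ⟨b₁, hb₁⟩ := hc₁
    obtain ⟨b₂, hb₂⟩ := hc₂
    simp only at heq
    have hlt1 : (c₁.toList.take (i+1)).length = i + 1 := by
      simp [List.Vector.toList_length]; omega
    have hlt2 : (c₂.toList.take (i+1)).length = i + 1 := by
      simp [List.Vector.toList_length]; omega
    have htake : c₁.toList.take (i+1) = c₂.toList.take (i+1) := by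
      have e1 : (c₁.toList.take (i+1) ++ c₁.toList.drop (i+r)).take (i+1)
          = c₁.toList.take (i+1) := List.take_left' hlt1
      have e2 : (c₂.toList.take (i+1) ++ c₂.toList.drop (i+r)).take (i+1)
          = c₂.toList.take (i+1) := List.take_left' hlt2
      rw [← e1, ← e2, heq]
    have hdrop : c₁.toList.drop (i+r) = c₂.toList.drop (i+r) := by
      have e1 : (c₁.toList.take (i+1) ++ c₁.toList.drop (i+r)).drop (i+1)
          = c₁.toList.drop (i+r) := List.drop_left' hlt1
      have e2 : (c₂.toList.take (i+1) ++ c₂.toList.drop (i+r)).drop (i+1)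
          = c₂.toList.drop (i+r) := List.drop_left' hlt2
      rw [← e1, ← e2, heq]
    have hb : b₁ = b₂ := by
      have w1 := window_head hr hb₁
      have w2 := window_head hr hb₂
      rw [htake] at w1
      rw [w2] at w1
      simpa using w1.symm
    have htakei : c₁.toList.take i = c₂.toList.take i := by
      have e1 : c₁.toList.take i = (c₁.toList.take (i+1)).take i := by
        rw [List.take_take]; congr 1; omega
      have e2 : c₂.toList.take i = (c₂.toList.take (i+1)).take i := by
        rw [List.take_take]; congr 1; omega
      rw [e1, e2, htake]
    apply List.Vector.toList_injective
    rw [window_decomp hb₁, window_decomp hb₂, htakei, hdrop, hb]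

lemma card_maxRun_ge_le (n s : ℕ) (hs : 1 ≤ s) (hsn : s ≤ n) :
    (Finset.univ.filter (fun c : List.Vector Bool n => s ≤ maxRun c.toList)).card
      ≤ n * 2 ^ (n - s + 1) := by
  classical
  have hsub : (Finset.univ.filter (fun c : List.Vector Bool n => s ≤ maxRun c.toList))
      ⊆ (Finset.range (n - s + 1)).biUnion (fun i =>
          Finset.univ.filter (fun c : List.Vector Bool n =>
            ∃ b, (c.toList.drop i).take s = List.replicate s b)) := by
    intro c hc
    simp only [Finset.mem_filter, Finset.mem_univ, true_and] at hc
    obtain ⟨i, b, hin, hw⟩ := exists_window hs hc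
    rw [List.Vector.toList_length] at hin
    simp only [Finset.mem_biUnion, Finset.mem_range, Finset.mem_filter, Finset.mem_univ, true_and]
    exact ⟨i, by omega, b, hw⟩
  calc (Finset.univ.filter (fun c : List.Vector Bool n => s ≤ maxRun c.toList)).card
      ≤ ((Finset.range (n - s + 1)).biUnion (fun i =>
          Finset.univ.filter (fun c : List.Vector Bool n =>
            ∃ b, (c.toList.drop i).take s = List.replicate s b))).card :=
        Finset.card_le_card hsub
    _ ≤ ∑ i ∈ Finset.range (n - s + 1), (Finset.univ.filter (fun c : List.Vector Bool n =>
            ∃ b, (c.toList.drop i).take s = List.replicate s b)).card :=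
        Finset.card_biUnion_le
    _ ≤ ∑ i ∈ Finset.range (n - s + 1), 2 ^ (n - s + 1) := by
        apply Finset.sum_le_sum
        intro i hi
        simp only [Finset.mem_range] at hi
        exact card_window_le n i s hs (by omega)
    _ = (n - s + 1) * 2 ^ (n - s + 1) := by
        rw [Finset.sum_const, Finset.card_range, smul_eq_mul]
    _ ≤ n * 2 ^ (n - s + 1) := by
        apply Nat.mul_le_mul_right
        omega

lemma sum_eq_sum_card_filter {α : Type*} [Fintype α] [DecidableEq α] (g : α → ℕ) (N : ℕ)
    (hg : ∀ a, g a ≤ N) :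
    ∑ a : α, g a = ∑ r ∈ Finset.range N, (Finset.univ.filter (fun a => r < g a)).card := by
  classical
  simp only [Finset.card_filter]
  rw [Finset.sum_comm]
  apply Finset.sum_congr rfl
  intro a _
  have : (Finset.range N).filter (fun r => r < g a) = Finset.range (g a) := by
    ext r
    simp only [Finset.mem_filter, Finset.mem_range]
    have := hg a
    omega
  rw [← Finset.card_filter, this, Finset.card_range]

lemma sum_pow2 (m : ℕ) : ∑ j ∈ Finset.range m, 2^j = 2^m - 1 := by
  induction m with
  | zero => simp
  | succ m ih => rw [Finset.sum_range_succ, ih]; have := Nat.one_le_two_pow (n := m); omega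

lemma sum_pow2_rev (m : ℕ) : ∑ j ∈ Finset.range m, 2^(m-j) ≤ 2^(m+1) := by
  have : ∑ j ∈ Finset.range m, 2^(m-j) = ∑ j ∈ Finset.range m, 2^(j+1) := by
    rw [← Finset.sum_range_reflect (fun j => 2^(j+1)) m]
    apply Finset.sum_congr rfl
    intro j hj
    simp only [Finset.mem_range] at hj
    congr 1
    omega
  rw [this]
  calc ∑ j ∈ Finset.range m, 2^(j+1) = 2 * ∑ j ∈ Finset.range m, 2^j := by
        rw [Finset.mul_sum]; apply Finset.sum_congr rfl; intro j _; ring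
    _ = 2 * (2^m - 1) := by rw [sum_pow2]
    _ ≤ 2^(m+1) := by have := Nat.one_le_two_pow (n := m); rw [pow_succ]; omega

lemma sum_maxRun_le (n : ℕ) (hn : 2 ≤ n) :
    ∑ c : List.Vector Bool n, maxRun c.toList ≤ (Nat.clog 2 n + 2) * 2 ^ n := by
  classical
  set t := Nat.clog 2 n with ht
  have htn : t ≤ n := by
    calc t ≤ Nat.clog 2 (2^n) := Nat.clog_mono_right 2 (Nat.le_of_lt (Nat.lt_two_pow_self))
      _ = n := Nat.clog_pow 2 n one_lt_two
  have hnt : n ≤ 2 ^ t := Nat.le_pow_clog one_lt_two n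
  rw [sum_eq_sum_card_filter (fun c : List.Vector Bool n => maxRun c.toList) n
    (fun c => by simpa [List.Vector.toList_length] using maxRun_le_length c.toList)]
  rw [Finset.range_eq_Ico, ← Finset.sum_Ico_consecutive _ (Nat.zero_le t) htn]
  have h1 : ∑ r ∈ Finset.Ico 0 t,
      (Finset.univ.filter (fun c : List.Vector Bool n => r < maxRun c.toList)).card
      ≤ t * 2 ^ n := by
    calc ∑ r ∈ Finset.Ico 0 t,
        (Finset.univ.filter (fun c : List.Vector Bool n => r < maxRun c.toList)).card
        ≤ ∑ r ∈ Finset.Ico 0 t, 2 ^ n := by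
          apply Finset.sum_le_sum
          intro r _
          calc (Finset.univ.filter (fun c : List.Vector Bool n => r < maxRun c.toList)).card
              ≤ (Finset.univ : Finset (List.Vector Bool n)).card :=
                Finset.card_le_card (Finset.filter_subset _ _)
            _ = 2 ^ n := by rw [Finset.card_univ, card_vector, Fintype.card_bool]
      _ = t * 2 ^ n := by simp [Nat.Ico_zero_eq_range, Finset.sum_const, Finset.card_range]
  have h2 : ∑ r ∈ Finset.Ico t n,
      (Finset.univ.filter (fun c : List.Vector Bool n => r < maxRun c.toList)).card
      ≤ 2 * 2 ^ n := by
    calc ∑ r ∈ Finset.Ico t n,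
        (Finset.univ.filter (fun c : List.Vector Bool n => r < maxRun c.toList)).card
        ≤ ∑ r ∈ Finset.Ico t n, 2 ^ t * 2 ^ (n - r) := by
          apply Finset.sum_le_sum
          intro r hr
          simp only [Finset.mem_Ico] at hr
          have : (Finset.univ.filter (fun c : List.Vector Bool n => r < maxRun c.toList))
              = (Finset.univ.filter
                  (fun c : List.Vector Bool n => r + 1 ≤ maxRun c.toList)) := by
            apply Finset.filter_congr
            intro c _
            exact Nat.lt_iff_add_one_le
          rw [this]
          calc (Finset.univ.filter
                (fun c : List.Vector Bool n => r + 1 ≤ maxRun c.toList)).card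
              ≤ n * 2 ^ (n - (r+1) + 1) := card_maxRun_ge_le n (r+1) (by omega) (by omega)
            _ = n * 2 ^ (n - r) := by congr 1; congr 1; omega
            _ ≤ 2 ^ t * 2 ^ (n - r) := Nat.mul_le_mul_right _ hnt
      _ = 2 ^ t * ∑ r ∈ Finset.Ico t n, 2 ^ (n - r) := by rw [Finset.mul_sum]
      _ ≤ 2 ^ t * 2 ^ (n - t + 1) := by
          apply Nat.mul_le_mul_left
          calc ∑ r ∈ Finset.Ico t n, 2 ^ (n - r)
              = ∑ j ∈ Finset.range (n - t), 2 ^ ((n - t) - j) := by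
                rw [Finset.sum_Ico_eq_sum_range]
                apply Finset.sum_congr rfl
                intro j hj
                simp only [Finset.mem_range] at hj
                congr 1
                omega
            _ ≤ 2 ^ (n - t + 1) := sum_pow2_rev (n - t)
      _ = 2 * 2 ^ n := by
          rw [← pow_add, ← pow_succ']
          congr 1
          omega
  calc _ ≤ t * 2^n + 2 * 2^n := Nat.add_le_add h1 h2
    _ = (t + 2) * 2 ^ n := by ring

lemma sum_transfer (n : ℕ) (g : List Bool → ℕ) :
    ∑ c : List.Vector Bool n, g c.toList = ∑ f : Fin n → Bool, g (List.ofFn f) := by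
  rw [← Fintype.sum_equiv (Equiv.vectorEquivFin Bool n).symm
    (fun f => g (List.ofFn f)) (fun c => g c.toList)]
  intro f
  show g (List.ofFn f) = g ((List.Vector.ofFn f).toList)
  rw [List.Vector.toList_ofFn]

lemma sum_maxRun_trivial (n : ℕ) :
    ∑ c : List.Vector Bool n, maxRun c.toList ≤ n * 2 ^ n := by
  calc ∑ c : List.Vector Bool n, maxRun c.toList
      ≤ ∑ _c : List.Vector Bool n, n := by
        apply Finset.sum_le_sum
        intro c _
        simpa [List.Vector.toList_length] using maxRun_le_length c.toList
    _ = n * 2 ^ n := by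
        rw [Finset.sum_const, Finset.card_univ, card_vector, Fintype.card_bool, smul_eq_mul,
          Nat.mul_comm]

lemma real_step (a b : ℕ) (hb : 1 ≤ b) (h : 2 ^ a ≤ b ^ 2) : (a : ℝ) ≤ 2 * Real.logb 2 b := by
  have h1 : (a : ℝ) = Real.logb 2 ((2:ℝ) ^ a) := by
    rw [Real.logb_pow, Real.logb_self_eq_one (by norm_num)]; ring
  have h2 : 2 * Real.logb 2 (b:ℝ) = Real.logb 2 ((b:ℝ) ^ 2) := by
    rw [Real.logb_pow]; push_cast; ring
  rw [h1, h2]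
  rw [Real.logb_le_logb (by norm_num) (by positivity) (by positivity)]
  exact_mod_cast h

lemma pow_clog_add_two_le_sq {n : ℕ} (h : n = 4 ∨ 6 ≤ n) :
    2 ^ (Nat.clog 2 n + 2) ≤ n ^ 2 := by
  rcases h with rfl | h6
  · have h4 : Nat.clog 2 4 = 2 := Nat.clog_pow 2 2 one_lt_two
    rw [h4]
    norm_num
  · set t := Nat.clog 2 n with htdef
    have hnt : n ≤ 2 ^ t := Nat.le_pow_clog one_lt_two n
    have h1 : 2 ^ (t - 1) < n := by
      have := Nat.pow_pred_clog_lt_self (b := 2) one_lt_two (x := n) (by omega)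
      simpa [Nat.pred_eq_sub_one] using this
    have ht3 : 3 ≤ t := by
      by_contra hc
      push_neg at hc
      have h4 : 2 ^ t ≤ 2 ^ 2 := Nat.pow_le_pow_right (by norm_num) (by omega)
      norm_num at h4
      omega
    rcases Nat.lt_or_ge t 4 with ht4 | ht4
    · have ht : t = 3 := by omega
      rw [ht]
      norm_num
      nlinarith
    · calc 2^(t+2) ≤ 2^(2*t-2) := Nat.pow_le_pow_right (by norm_num) (by omega)
        _ = 2^(t-1) * 2^(t-1) := by rw [← pow_add]; congr 1; omega
        _ ≤ n * n := Nat.mul_le_mul h1.le h1.le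
        _ = n^2 := (sq n).symm

/-- For every `n ≥ 2`, the average over all binary words of length `n` of the maximal
run length is at most `2 log₂ n`. -/
theorem avg_max_run_le (n : ℕ) (hn : 2 ≤ n) :
    (∑ c : List.Vector Bool n, (maxRun c.toList : ℝ)) / 2 ^ n
      ≤ 2 * Real.logb 2 n := by
  suffices h : ∃ K : ℕ,
      (∑ c : List.Vector Bool n, maxRun c.toList) ≤ K * 2 ^ n ∧
        (K : ℝ) ≤ 2 * Real.logb 2 n by
    obtain ⟨K, hK1, hK2⟩ := h
    have h2n : (0:ℝ) < 2 ^ n := by positivity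
    rw [div_le_iff₀ h2n]
    calc (∑ c : List.Vector Bool n, (maxRun c.toList : ℝ))
        = ((∑ c : List.Vector Bool n, maxRun c.toList : ℕ) : ℝ) := by push_cast; rfl
      _ ≤ ((K * 2 ^ n : ℕ) : ℝ) := by exact_mod_cast hK1
      _ = (K : ℝ) * 2 ^ n := by push_cast; ring
      _ ≤ (2 * Real.logb 2 n) * 2 ^ n := by
          apply mul_le_mul_of_nonneg_right hK2 (le_of_lt h2n)
  by_cases h2 : n = 2
  · subst h2
    exact ⟨2, sum_maxRun_trivial 2, real_step 2 2 (by norm_num) (by norm_num)⟩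
  by_cases h3 : n = 3
  · subst h3
    exact ⟨3, sum_maxRun_trivial 3, real_step 3 3 (by norm_num) (by norm_num)⟩
  by_cases h5 : n = 5
  · subst h5
    refine ⟨4, ?_, real_step 4 5 (by norm_num) (by norm_num)⟩
    rw [sum_transfer]
    decide
  · refine ⟨Nat.clog 2 n + 2, sum_maxRun_le n hn, ?_⟩
    have := real_step (Nat.clog 2 n + 2) n (by omega)
      (pow_clog_add_two_le_sq (by omega))
    exact_mod_cast this
end
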